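/- Let (X, μ) be a probability space, let λ, L > 0, and let a : ℝ^d × X → ℝ^d be measurable, with p ↦ a(p,x) strongly monotone with constant λ (i.e. (a(p,x)−a(q,x))·(p−q) ≥ λ|p−q|²) and L-Lipschitz, uniformly in x. Suppose that for each p ∈ ℝ^d there is w_p ∈ L²(X; ℝ^d) with ∫_X w_p dμ = 0 and such that for all p, q ∈ ℝ^d, ∫_X (a(w_p(x)+p, x) − a(w_q(x)+q, x)) · (w_p(x) − w_q(x)) dμ(x) = 0. Define ā(p) = ∫_X a(w_p(x)+p, x) dμ(x). Then for all p, q: (ā(p)−ā(q))·(p−q) ≥ λ·(|p−q|² + ‖w_p − w_q‖²_{L²(X)}). -/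

import Mathlib

open MeasureTheory
open scoped InnerProductSpace

/-!
Integrating the strong monotonicity of `a` between the arguments `w p + p` and `w q + q` gives
`λ ∫ |(w_p - w_q) + (p - q)|² ≤ ∫ (a(w_p + p) - a(w_q + q)) · ((w_p - w_q) + (p - q))`.
Since `w_p - w_q` has mean zero, the left side is `λ (|p - q|² + ‖w_p - w_q‖²)`; by the
orthogonality hypothesis the right side is `(ā p - ā q) · (p - q)`. The Lipschitz bound makes the
difference of the fluxes square integrable, so every integrand above is integrable.
-/

section

variable {X E : Type*} [MeasurableSpace X] {μ : Measure X}
  [NormedAddCommGroup E] [InnerProductSpace ℝ E]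

theorem MeasureTheory.MemLp.integrable_real_inner {f g : X → E} (hf : MemLp f 2 μ)
    (hg : MemLp g 2 μ) : Integrable (fun x => ⟪f x, g x⟫_ℝ) μ := by
  refine (L2.integrable_inner (𝕜 := ℝ) (hf.toLp f) (hg.toLp g)).congr ?_
  filter_upwards [hf.coeFn_toLp, hg.coeFn_toLp] with x hfx hgx
  rw [hfx, hgx]

variable [CompleteSpace E]

theorem integral_real_inner_const {f : X → E} (hf : Integrable f μ) (c : E) :
    ∫ x, ⟪f x, c⟫_ℝ ∂μ = ⟪∫ x, f x ∂μ, c⟫_ℝ := by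
  simpa only [real_inner_comm c] using integral_inner (𝕜 := ℝ) hf c

theorem integral_norm_add_const_sq [IsProbabilityMeasure μ] {u : X → E} (hu : MemLp u 2 μ)
    (hmean : ∫ x, u x ∂μ = 0) (c : E) :
    ∫ x, ‖u x + c‖ ^ 2 ∂μ = ‖c‖ ^ 2 + ∫ x, ‖u x‖ ^ 2 ∂μ := by
  have hu_sq : Integrable (fun x => ‖u x‖ ^ 2) μ := hu.norm.integrable_sq
  have hu_c : Integrable (fun x => 2 * ⟪u x, c⟫_ℝ) μ :=
    ((hu.integrable one_le_two).inner_const c).const_mul 2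
  have hu_sq_c : Integrable (fun x => ‖u x‖ ^ 2 + 2 * ⟪u x, c⟫_ℝ) μ := hu_sq.add hu_c
  simp only [norm_add_sq_real]
  rw [integral_add hu_sq_c (integrable_const _), integral_add hu_sq hu_c,
    integral_const_mul, integral_real_inner_const (hu.integrable one_le_two), hmean,
    inner_zero_left, integral_const, probReal_univ, one_smul]
  ring

theorem integral_inner_add_const [IsFiniteMeasure μ] {D u : X → E} (hD : MemLp D 2 μ)
    (hu : MemLp u 2 μ) (c : E) :
    ∫ x, ⟪D x, u x + c⟫_ℝ ∂μ = ∫ x, ⟪D x, u x⟫_ℝ ∂μ + ⟪∫ x, D x ∂μ, c⟫_ℝ := by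
  simp only [inner_add_right]
  rw [integral_add (hD.integrable_real_inner hu) ((hD.integrable one_le_two).inner_const c),
    integral_real_inner_const (hD.integrable one_le_two)]

end

theorem stmt_11_general (d : ℕ)
    {X : Type*} [MeasurableSpace X] (μ : Measure X) [IsProbabilityMeasure μ]
    (lam L : ℝ)
    (a : EuclideanSpace ℝ (Fin d) → X → EuclideanSpace ℝ (Fin d))
    (hmono : ∀ x p q, lam * ‖p - q‖ ^ 2 ≤ ⟪a p x - a q x, p - q⟫_ℝ)
    (hlip : ∀ x p q, ‖a p x - a q x‖ ≤ L * ‖p - q‖)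
    (w : EuclideanSpace ℝ (Fin d) → X → EuclideanSpace ℝ (Fin d))
    (hw2 : ∀ p, MemLp (w p) 2 μ)
    (hwmean : ∀ p, ∫ x, w p x ∂μ = 0)
    (hint : ∀ p, Integrable (fun x => a (w p x + p) x) μ)
    (horth : ∀ p q,
      ∫ x, ⟪a (w p x + p) x - a (w q x + q) x, w p x - w q x⟫_ℝ ∂μ = 0)
    (abar : EuclideanSpace ℝ (Fin d) → EuclideanSpace ℝ (Fin d))
    (habar : ∀ p, abar p = ∫ x, a (w p x + p) x ∂μ) :
    ∀ p q, lam * (‖p - q‖ ^ 2 + ∫ x, ‖w p x - w q x‖ ^ 2 ∂μ)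
      ≤ ⟪abar p - abar q, p - q⟫_ℝ := by
  intro p q
  have hu : MemLp (fun x => w p x - w q x) 2 μ := (hw2 p).sub (hw2 q)
  have hu_mean : ∫ x, w p x - w q x ∂μ = 0 := by
    rw [integral_sub ((hw2 p).integrable one_le_two) ((hw2 q).integrable one_le_two),
      hwmean, hwmean, sub_zero]
  have hv : MemLp (fun x => (w p x - w q x) + (p - q)) 2 μ := hu.add (memLp_const (p - q))
  have hshift : ∀ x, (w p x + p) - (w q x + q) = (w p x - w q x) + (p - q) :=
    fun x => by abel
  have hD : MemLp (fun x => a (w p x + p) x - a (w q x + q) x) 2 μ :=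
    hv.of_le_mul ((hint p).sub (hint q)).aestronglyMeasurable <| ae_of_all _ fun x => by
      simpa only [hshift] using hlip x (w p x + p) (w q x + q)
  calc lam * (‖p - q‖ ^ 2 + ∫ x, ‖w p x - w q x‖ ^ 2 ∂μ)
      = ∫ x, lam * ‖(w p x - w q x) + (p - q)‖ ^ 2 ∂μ := by
        rw [integral_const_mul, integral_norm_add_const_sq hu hu_mean]
    _ ≤ ∫ x, ⟪a (w p x + p) x - a (w q x + q) x, (w p x - w q x) + (p - q)⟫_ℝ ∂μ :=
        integral_mono (hv.norm.integrable_sq.const_mul lam) (hD.integrable_real_inner hv)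
          fun x => by simpa only [hshift] using hmono x (w p x + p) (w q x + q)
    _ = ⟪abar p - abar q, p - q⟫_ℝ := by
        rw [integral_inner_add_const hD hu, horth, zero_add,
          integral_sub (hint p) (hint q), habar, habar]

theorem stmt_11 (d : ℕ) (hd : 1 ≤ d)
    {X : Type*} [MeasurableSpace X] (μ : Measure X) [IsProbabilityMeasure μ]
    (lam L : ℝ) (hlam : 0 < lam) (hL : 0 < L)
    (a : EuclideanSpace ℝ (Fin d) → X → EuclideanSpace ℝ (Fin d))
    (hmeas : ∀ p, Measurable (a p))
    (hmono : ∀ x p q, lam * ‖p - q‖ ^ 2 ≤ ⟪a p x - a q x, p - q⟫_ℝ)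
    (hlip : ∀ x p q, ‖a p x - a q x‖ ≤ L * ‖p - q‖)
    (w : EuclideanSpace ℝ (Fin d) → X → EuclideanSpace ℝ (Fin d))
    (hw2 : ∀ p, MemLp (w p) 2 μ)
    (hwmean : ∀ p, ∫ x, w p x ∂μ = 0)
    (hint : ∀ p, Integrable (fun x => a (w p x + p) x) μ)
    (horth : ∀ p q,
      ∫ x, ⟪a (w p x + p) x - a (w q x + q) x, w p x - w q x⟫_ℝ ∂μ = 0)
    (abar : EuclideanSpace ℝ (Fin d) → EuclideanSpace ℝ (Fin d))
    (habar : ∀ p, abar p = ∫ x, a (w p x + p) x ∂μ) :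
    ∀ p q, lam * (‖p - q‖ ^ 2 + ∫ x, ‖w p x - w q x‖ ^ 2 ∂μ)
      ≤ ⟪abar p - abar q, p - q⟫_ℝ :=
  stmt_11_general d μ lam L a hmono hlip w hw2 hwmean hint horth abar habar
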